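/- arXiv:1801.07661 — 3 statements merged into one kernel-verified Lean document; each statement's English description precedes it below -/
import Mathlib

section
/- Define γ(t,x) = γ₁(t,x) + γ₂(t,x), where γ₁(t,x) = ∫₀^t (1+s)^{-(x+1)} · e^{-1/(1+s)} ds and γ₂(t,x) = ∫₀^t (1+s)^{x-1} · e^{-(1+s)} ds (real powers). Then there exists a constant C > 0 such that for every real τ ≥ 0 and all t₁, t₂ ≥ C·2^τ, one has Σ_{n=1}^∞ 2^{-n} · min( sup_{x ∈ [1,n]} |γ(t₁,x) − γ(t₂,x)| , 1 ) < 2^{-τ}. -/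
open Real

noncomputable def gamma1 (t x : ℝ) : ℝ :=
  ∫ s in (0 : ℝ)..t, (1 + s) ^ (-(x + 1)) * Real.exp (-(1 / (1 + s)))

noncomputable def gamma2 (t x : ℝ) : ℝ :=
  ∫ s in (0 : ℝ)..t, (1 + s) ^ (x - 1) * Real.exp (-(1 + s))

noncomputable def gammaStream (t x : ℝ) : ℝ := gamma1 t x + gamma2 t x

/-!
Once `1 + s ≥ 4 (x + 1)²`, both integrands of `γ(·, x)` are at most `(1 + s)⁻²`: the first because
`x ≥ 1`, the second because `u ^ (x + 1) ≤ eᵘ` as soon as `4 (x + 1)² ≤ u` (from `log u ≤ 2 √u`).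
Hence `|γ(t₁, x) − γ(t₂, x)| ≤ 2 / (1 + T)` for `t₁, t₂ ≥ T`, uniformly in `x ∈ [1, τ + 2]` when
`T = 36 · 2^τ ≥ 4 (τ + 3)²`. In the metric, the terms `n ≤ ⌈τ⌉ + 1` then contribute less than
`2^{-τ} / 2`, and the remaining ones at most `2^{-⌈τ⌉-1} ≤ 2^{-τ} / 2`.
-/

open Set Interval

lemma tsum_two_zpow_mul_min_le {a : ℕ → ℝ} (ha : ∀ n, 0 ≤ a n) {ε : ℝ} (hε : 0 ≤ ε) {N : ℕ}
    (haN : ∀ n < N, a n ≤ ε) :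
    ∑' n : ℕ, (2 : ℝ) ^ (-((n : ℤ) + 1)) * min (a n) 1 ≤ ε + ((2 : ℝ) ^ N)⁻¹ := by
  have hweight (n : ℕ) : (2 : ℝ) ^ (-((n : ℤ) + 1)) = 1 / 2 / 2 ^ n := by
    rw [zpow_neg, ← Nat.cast_succ, zpow_natCast, pow_succ]; ring
  simp_rw [hweight]
  have hle (n : ℕ) : 1 / 2 / 2 ^ n * min (a n) 1 ≤ 1 / 2 / 2 ^ n :=
    mul_le_of_le_one_right (by positivity) (min_le_right _ _)
  have hnonneg (n : ℕ) : 0 ≤ 1 / 2 / 2 ^ n * min (a n) 1 :=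
    mul_nonneg (by positivity) (le_min (ha n) zero_le_one)
  have hsum := (summable_geometric_two' 1).of_nonneg_of_le hnonneg hle
  rw [← hsum.sum_add_tsum_nat_add N]
  gcongr
  · calc ∑ n ∈ Finset.range N, 1 / 2 / 2 ^ n * min (a n) 1
        ≤ ∑ n ∈ Finset.range N, ε / 2 / 2 ^ n := by
          gcongr with n hn
          calc 1 / 2 / 2 ^ n * min (a n) 1 ≤ 1 / 2 / 2 ^ n * ε := by
                gcongr; exact (min_le_left _ _).trans (haN n (Finset.mem_range.1 hn))
            _ = ε / 2 / 2 ^ n := by ring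
      _ ≤ ∑' n : ℕ, ε / 2 / 2 ^ n :=
          (summable_geometric_two' ε).sum_le_tsum _ fun n _ => by positivity
      _ = ε := tsum_geometric_two' ε
  · calc ∑' n : ℕ, 1 / 2 / 2 ^ (n + N) * min (a (n + N)) 1
        ≤ ∑' n : ℕ, ((2 : ℝ) ^ N)⁻¹ / 2 / 2 ^ n :=
          (hsum.comp_injective (add_left_injective N)).tsum_le_tsum
            (fun n => (hle (n + N)).trans_eq (by rw [pow_add]; ring))
            (summable_geometric_two' _)
      _ = ((2 : ℝ) ^ N)⁻¹ := tsum_geometric_two' _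

lemma rpow_le_exp_of_four_mul_sq_le {u m : ℝ} (hu : 0 < u) (hm : 0 ≤ m) (hmu : 4 * m ^ 2 ≤ u) :
    u ^ m ≤ exp u := by
  have hlog : log u ≤ 2 * √u := by
    have := log_le_rpow_div hu.le one_half_pos
    rwa [← sqrt_eq_rpow, div_eq_mul_inv, one_div, inv_inv, mul_comm] at this
  have hm_le : 2 * m ≤ √u := by
    simpa [sqrt_mul_self, hm, show 4 * m ^ 2 = (2 * m) * (2 * m) by ring] using sqrt_le_sqrt hmu
  rw [rpow_def_of_pos hu, exp_le_exp]
  nlinarith [sq_sqrt hu.le, sqrt_nonneg u]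

lemma rpow_neg_add_one_mul_exp_le {u x : ℝ} (hu : 1 ≤ u) (hx : 1 ≤ x) :
    u ^ (-(x + 1)) * exp (-(1 / u)) ≤ (u ^ 2)⁻¹ := by
  have hexp : exp (-(1 / u)) ≤ 1 := exp_le_one_iff.2 (neg_nonpos.2 (by positivity))
  calc u ^ (-(x + 1)) * exp (-(1 / u)) ≤ u ^ (-(x + 1)) :=
        mul_le_of_le_one_right (by positivity) hexp
    _ ≤ u ^ (-2 : ℝ) := rpow_le_rpow_of_exponent_le hu (by linarith)
    _ = (u ^ 2)⁻¹ := by rw [rpow_neg (by positivity), rpow_two]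

lemma rpow_sub_one_mul_exp_neg_le {u x : ℝ} (hu : 0 < u) (hx : -1 ≤ x)
    (hxu : 4 * (x + 1) ^ 2 ≤ u) : u ^ (x - 1) * exp (-u) ≤ (u ^ 2)⁻¹ := by
  have hpow := rpow_le_exp_of_four_mul_sq_le hu (by linarith) hxu
  calc u ^ (x - 1) * exp (-u) = u ^ (x + 1) * exp (-u) * (u ^ 2)⁻¹ := by
        rw [show x - 1 = x + 1 - 2 by ring, rpow_sub hu, rpow_two]; ring
    _ ≤ exp u * exp (-u) * (u ^ 2)⁻¹ := by gcongr
    _ = (u ^ 2)⁻¹ := by rw [← exp_add, add_neg_cancel, exp_zero, one_mul]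

lemma abs_intervalIntegral_le_inv_one_add {f : ℝ → ℝ} {a b T : ℝ} (hT : -1 < T) (ha : T ≤ a)
    (hb : T ≤ b) (hf : ∀ s ∈ Ι a b, |f s| ≤ ((1 + s) ^ 2)⁻¹) :
    |∫ s in a..b, f s| ≤ (1 + T)⁻¹ := by
  have hpos : ∀ s ∈ uIcc a b, 0 < 1 + s := fun s hs => by
    have := (le_min ha hb).trans hs.1; linarith
  have hderiv : ∀ s ∈ uIcc a b, HasDerivAt (fun s => -(1 + s)⁻¹) ((1 + s) ^ 2)⁻¹ s := by
    intro s hs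
    exact (((hasDerivAt_id s).const_add 1).inv (hpos s hs).ne').neg.congr_deriv (by simp [neg_div])
  have hint : IntervalIntegrable (fun s => ((1 + s) ^ 2)⁻¹) MeasureTheory.volume a b :=
    (ContinuousOn.inv₀ (by fun_prop) fun s hs => pow_ne_zero 2 (hpos s hs).ne').intervalIntegrable
  have hinv : ∀ c, T ≤ c → 0 ≤ (1 + c)⁻¹ ∧ (1 + c)⁻¹ ≤ (1 + T)⁻¹ := fun c hc =>
    ⟨inv_nonneg.2 (by linarith), inv_anti₀ (by linarith) (by linarith)⟩
  calc |∫ s in a..b, f s| ≤ |∫ s in a..b, ((1 + s) ^ 2)⁻¹| :=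
        intervalIntegral.norm_integral_le_abs_of_norm_le (f := f)
          (MeasureTheory.ae_restrict_of_forall_mem measurableSet_uIoc hf) hint
    _ = |(1 + a)⁻¹ - (1 + b)⁻¹| := by
        rw [intervalIntegral.integral_eq_sub_of_hasDerivAt hderiv hint]; ring_nf
    _ ≤ (1 + T)⁻¹ :=
        abs_sub_le_of_nonneg_of_le (hinv a ha).1 (hinv a ha).2 (hinv b hb).1 (hinv b hb).2

lemma intervalIntegral_sub_of_continuousOn_Ici {f : ℝ → ℝ} {a t₁ t₂ : ℝ}
    (hf : ContinuousOn f (Ici a)) (h₁ : a ≤ t₁) (h₂ : a ≤ t₂) :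
    (∫ s in a..t₁, f s) - ∫ s in a..t₂, f s = ∫ s in t₂..t₁, f s := by
  have hint : ∀ t, a ≤ t → IntervalIntegrable f MeasureTheory.volume a t := fun t ht =>
    (hf.mono (by rw [uIcc_of_le ht]; exact Icc_subset_Ici_self)).intervalIntegrable
  exact intervalIntegral.integral_interval_sub_left (hint t₁ h₁) (hint t₂ h₂)

lemma abs_gammaStream_sub_le {x T t₁ t₂ : ℝ} (hx : 1 ≤ x) (hxT : 4 * (x + 1) ^ 2 ≤ 1 + T)
    (h₁ : T ≤ t₁) (h₂ : T ≤ t₂) : |gammaStream t₁ x - gammaStream t₂ x| ≤ 2 * (1 + T)⁻¹ := by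
  have hT : 0 ≤ T := by nlinarith
  rw [gammaStream, gammaStream, add_sub_add_comm, gamma1, gamma1, gamma2, gamma2,
    intervalIntegral_sub_of_continuousOn_Ici ?cont₁ (hT.trans h₁) (hT.trans h₂),
    intervalIntegral_sub_of_continuousOn_Ici ?cont₂ (hT.trans h₁) (hT.trans h₂), two_mul]
  case cont₁ | cont₂ => fun_prop (disch := intro s (hs : 0 ≤ s); linarith)
  have hmem : ∀ s ∈ Ι t₂ t₁, 1 + T ≤ 1 + s := fun s hs => by
    linarith [(le_min h₂ h₁).trans hs.1.le]
  refine (abs_add_le _ _).trans (add_le_add ?_ ?_)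
  · refine abs_intervalIntegral_le_inv_one_add (by linarith) h₂ h₁ fun s hs => ?_
    have hs := hmem s hs
    rw [abs_of_nonneg (mul_nonneg (rpow_nonneg (by linarith) _) (exp_pos _).le)]
    exact rpow_neg_add_one_mul_exp_le (by linarith) hx
  · refine abs_intervalIntegral_le_inv_one_add (by linarith) h₂ h₁ fun s hs => ?_
    have hs := hmem s hs
    rw [abs_of_nonneg (mul_nonneg (rpow_nonneg (by linarith) _) (exp_pos _).le)]
    exact rpow_sub_one_mul_exp_neg_le (by linarith) (by linarith) (by linarith)

lemma sq_add_three_le_nine_mul_two_rpow {τ : ℝ} (hτ : 0 ≤ τ) : (τ + 3) ^ 2 ≤ 9 * (2 : ℝ) ^ τ := by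
  have hy : 0.69 * τ ≤ log 2 * τ := by nlinarith [log_two_gt_d9]
  have hy_sq : (0.69 * τ) ^ 2 ≤ (log 2 * τ) ^ 2 := pow_le_pow_left₀ (by positivity) hy 2
  have hexp := quadratic_le_exp_of_nonneg ((by positivity : (0 : ℝ) ≤ 0.69 * τ).trans hy)
  rw [rpow_def_of_pos two_pos]
  nlinarith

lemma inv_two_pow_ceil_add_one_le (τ : ℝ) :
    ((2 : ℝ) ^ (⌈τ⌉₊ + 1))⁻¹ ≤ (2 : ℝ) ^ (-τ) / 2 := by
  calc ((2 : ℝ) ^ (⌈τ⌉₊ + 1))⁻¹ = 2 ^ (-((⌈τ⌉₊ + 1 : ℕ) : ℝ)) := by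
        rw [rpow_neg two_pos.le, rpow_natCast]
    _ ≤ 2 ^ (-τ - 1) := by
        apply rpow_le_rpow_of_exponent_le one_le_two
        push_cast
        linarith [Nat.le_ceil τ]
    _ = 2 ^ (-τ) / 2 := by rw [rpow_sub two_pos, rpow_one]

/-- There is a constant `C > 0` such that `γ` is a `T`-convergent
Cauchy stream for `T(τ) = C·2^τ`, with respect to the metric
`d(g,h) = Σ_{n≥1} 2^{-n} · min(sup_{x ∈ [1,n]} |g(x) − h(x)|, 1)`. -/
theorem gammaStream_effective_cauchy :
    ∃ C : ℝ, 0 < C ∧ ∀ τ : ℝ, 0 ≤ τ → ∀ t₁ t₂ : ℝ,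
      C * (2 : ℝ) ^ τ ≤ t₁ → C * (2 : ℝ) ^ τ ≤ t₂ →
      (∑' n : ℕ, (2 : ℝ) ^ (-((n : ℤ) + 1)) *
        min (sSup ((fun x => |gammaStream t₁ x - gammaStream t₂ x|) ''
          Set.Icc (1 : ℝ) ((n : ℝ) + 1))) 1) < (2 : ℝ) ^ (-τ) := by
  refine ⟨36, by norm_num, fun τ hτ t₁ t₂ h₁ h₂ => ?_⟩
  have h2τ : 0 < (2 : ℝ) ^ τ := rpow_pos_of_pos two_pos τ
  have hsup_nonneg (n : ℕ) : 0 ≤ sSup ((fun x => |gammaStream t₁ x - gammaStream t₂ x|) ''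
      Icc 1 ((n : ℝ) + 1)) :=
    Real.sSup_nonneg (by rintro _ ⟨x, -, rfl⟩; exact abs_nonneg _)
  have hsup_le (n : ℕ) (hn : n < ⌈τ⌉₊ + 1) : sSup ((fun x => |gammaStream t₁ x - gammaStream t₂ x|) ''
      Icc 1 ((n : ℝ) + 1)) ≤ 2 * (1 + 36 * 2 ^ τ)⁻¹ := by
    refine Real.sSup_le ?_ (by positivity)
    rintro _ ⟨x, ⟨hx₁, hxn⟩, rfl⟩
    have hxτ : x ≤ τ + 2 := by
      have : (n : ℝ) ≤ ⌈τ⌉₊ := by exact_mod_cast Nat.lt_succ_iff.mp hn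
      linarith [Nat.ceil_lt_add_one hτ]
    refine abs_gammaStream_sub_le hx₁ ?_ h₁ h₂
    nlinarith [sq_add_three_le_nine_mul_two_rpow hτ]
  have hε : 2 * (1 + 36 * (2 : ℝ) ^ τ)⁻¹ < 2 ^ (-τ) / 2 := by
    rw [rpow_neg two_pos.le]
    field_simp
    linarith
  calc _ ≤ 2 * (1 + 36 * (2 : ℝ) ^ τ)⁻¹ + ((2 : ℝ) ^ (⌈τ⌉₊ + 1))⁻¹ :=
        tsum_two_zpow_mul_min_le hsup_nonneg (by positivity) hsup_le
    _ < 2 ^ (-τ) / 2 + 2 ^ (-τ) / 2 := add_lt_add_of_lt_of_le hε (inv_two_pow_ceil_add_one_le τ)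
    _ = 2 ^ (-τ) := add_halves _
end

section
/- Let g ∈ ℝ and let v : ℝ → ℝ be differentiable with continuous derivative v'. Define u(t) = g · exp(v(t) − v(0)). Then: (i) for every t ≥ 0, u(t) = g + ∫₀^t u(s) · v'(s) ds; and (ii) if w : ℝ → ℝ is continuous and satisfies w(t) = g + ∫₀^t w(s) · v'(s) ds for all t ≥ 0, then w(t) = u(t) for all t ≥ 0. -/
/-!
Existence is the fundamental theorem of calculus for `exp ∘ (v - v 0)`. For uniqueness,
`W t = g + ∫₀ᵗ w v'` is differentiable with `W' = W v'` on `[0, ∞)` because `w = W` there, so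
the integrating factor makes `W · exp (v 0 - v)` constant, equal to its value `g` at `0`.
-/

open Real intervalIntegral

section LinearODE

variable {v : ℝ → ℝ}

theorem integral_exp_sub_mul_deriv (hv : Differentiable ℝ v) (hv' : Continuous (deriv v))
    (c a b : ℝ) :
    ∫ s in a..b, exp (v s - c) * deriv v s = exp (v b - c) - exp (v a - c) :=
  integral_eq_sub_of_hasDerivAt (fun s _ => ((hv s).hasDerivAt.sub_const c).exp)
    (((continuous_exp.comp (hv.continuous.sub continuous_const)).mul hv').intervalIntegrable _ _)

theorem eq_mul_exp_sub_of_hasDerivAt_mul_deriv (hv : Differentiable ℝ v) {y : ℝ → ℝ} {a : ℝ}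
    (hy : ∀ s, a ≤ s → HasDerivAt y (y s * deriv v s) s) {t : ℝ} (ht : a ≤ t) :
    y t = y a * exp (v t - v a) := by
  set φ : ℝ → ℝ := fun s => y s * exp (v a - v s)
  have hφ : ∀ s, a ≤ s → HasDerivAt φ 0 s := fun s hs =>
    ((hy s hs).mul ((hv s).hasDerivAt.const_sub (v a)).exp).congr_deriv (by ring)
  have hφ_const : φ t = φ a :=
    constant_of_has_deriv_right_zero
      (fun s hs => (hφ s hs.1).continuousAt.continuousWithinAt)
      (fun s hs => (hφ s hs.1).hasDerivWithinAt) t ⟨ht, le_rfl⟩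
  have hφ_a : φ a = y a := by simp [φ]
  calc y t = φ t * exp (v t - v a) := by simp [φ, mul_assoc, ← exp_add]
    _ = y a * exp (v t - v a) := by rw [hφ_const, hφ_a]

end LinearODE

/-- With `v` differentiable with continuous derivative, the
function `u(t) = g·exp(v(t) − v(0))` satisfies the integrator fixed-point
equation `u(t) = g + ∫₀ᵗ u(s)·v'(s) ds` for all `t ≥ 0`, and it is the unique
continuous solution of this equation on `[0,∞)`. -/
theorem integrator_fixed_point (g : ℝ) (v : ℝ → ℝ)
    (hv : Differentiable ℝ v) (hv' : Continuous (deriv v))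
    (u : ℝ → ℝ) (hu : ∀ t : ℝ, u t = g * Real.exp (v t - v 0)) :
    (∀ t : ℝ, 0 ≤ t → u t = g + ∫ s in (0 : ℝ)..t, u s * deriv v s) ∧
    (∀ w : ℝ → ℝ, Continuous w →
      (∀ t : ℝ, 0 ≤ t → w t = g + ∫ s in (0 : ℝ)..t, w s * deriv v s) →
      ∀ t : ℝ, 0 ≤ t → w t = u t) := by
  refine ⟨fun t _ => ?_, fun w hw hw_fix t ht => ?_⟩
  · simp_rw [hu, mul_assoc, integral_const_mul, integral_exp_sub_mul_deriv hv hv',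
      sub_self, exp_zero]
    ring
  · set W : ℝ → ℝ := fun t => g + ∫ s in (0 : ℝ)..t, w s * deriv v s
    have hW : ∀ s, 0 ≤ s → HasDerivAt W (W s * deriv v s) s := fun s hs => by
      have hWs : W s = w s := (hw_fix s hs).symm
      rw [hWs]
      exact ((hw.mul hv').integral_hasStrictDerivAt 0 s).hasDerivAt.const_add g
    have hW_0 : W 0 = g := by simp [W]
    calc w t = W t := hw_fix t ht
      _ = W 0 * exp (v t - v 0) := eq_mul_exp_sub_of_hasDerivAt_mul_deriv hv hW ht
      _ = u t := by rw [hW_0, hu]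
end

section
/- Define ζ₁(t,x) = 2^x/(x−1) − 2^x · ∫₀^t sin(x·arctan s) · (1+s²)^{-x/2} · e^{-π·s−1} ds for t ≥ 0 and real x ≥ 2 (real powers). Then for every real τ ≥ 0 and all t₁, t₂ ≥ τ, one has Σ_{n=2}^∞ 2^{-n} · min( sup_{x ∈ [2,n]} |ζ₁(t₁,x) − ζ₁(t₂,x)| , 1 ) < 2^{-τ}. -/
/-!
`ζ₁(t₁,x) − ζ₁(t₂,x)` is `2^x` times the integral from `t₁` to `t₂` of an integrand bounded by
`e^{-πs-1}`, so the `n`-th seminorm is at most `2^n C` with `C = e^{-πτ-1}/π`. Bounding `min (2^n C) 1 ≤ √(2^n C)` turns the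
series into a geometric one of ratio `1/√2`, whose sum is below `2√C`; and `2√C < 2^{-τ}` since
`π/2 > log 2`.
-/

open Real

/-- `ζ₁(t,x) = 2^x/(x−1) − 2^x·∫₀ᵗ sin(x·arctan s)·(1+s²)^{-x/2}·e^{-πs−1} ds`. -/
noncomputable def zeta1 (t x : ℝ) : ℝ :=
  (2 : ℝ) ^ x / (x - 1) -
    (2 : ℝ) ^ x * ∫ s in (0 : ℝ)..t,
      Real.sin (x * Real.arctan s) * (1 + s ^ 2) ^ (-(x / 2)) *
        Real.exp (-(Real.pi * s) - 1)

theorem integral_exp_neg_mul_le {c : ℝ} (hc : 0 < c) (a b : ℝ) :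
    ∫ s in a..b, exp (-(c * s)) ≤ exp (-(c * a)) / c := by
  have hint : ∫ s in a..b, exp (-(c * s)) = (exp (-(c * a)) - exp (-(c * b))) / c := by
    rw [intervalIntegral.integral_comp_mul_left (fun s => exp (-s)) hc.ne',
      intervalIntegral.integral_comp_neg (fun s => exp s), integral_exp, smul_eq_mul]
    field_simp
  rw [hint]
  gcongr
  linarith [exp_pos (-(c * b))]

theorem abs_intervalIntegral_le_of_abs_le_mul_exp {f : ℝ → ℝ} {K c τ a b : ℝ} (hc : 0 < c)
    (hf : ∀ s, τ ≤ s → |f s| ≤ K * exp (-(c * s))) (ha : τ ≤ a) (hb : τ ≤ b) :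
    |∫ s in a..b, f s| ≤ K * exp (-(c * τ)) / c := by
  have hK : 0 ≤ K := nonneg_of_mul_nonneg_left ((abs_nonneg _).trans (hf τ le_rfl)) (exp_pos _)
  wlog hab : a ≤ b generalizing a b
  · rw [intervalIntegral.integral_symm, abs_neg]
    exact this hb ha (le_of_not_ge hab)
  have hexp_int : IntervalIntegrable (fun s => exp (-(c * s))) MeasureTheory.volume a b :=
    (by fun_prop : Continuous fun s => exp (-(c * s))).intervalIntegrable a b
  calc |∫ s in a..b, f s|
      ≤ ∫ s in a..b, K * exp (-(c * s)) := by
        simpa only [Real.norm_eq_abs] using intervalIntegral.norm_integral_le_of_norm_le (f := f) hab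
          (Filter.Eventually.of_forall fun s hs => hf s (ha.trans hs.1.le)) (hexp_int.const_mul K)
    _ = K * ∫ s in a..b, exp (-(c * s)) := intervalIntegral.integral_const_mul K _
    _ ≤ K * (exp (-(c * a)) / c) := by gcongr; exact integral_exp_neg_mul_le hc a b
    _ ≤ K * exp (-(c * τ)) / c := by
        rw [mul_div_assoc]; gcongr

theorem min_one_le_sqrt {a : ℝ} (ha : 0 ≤ a) : min a 1 ≤ √a := by
  rcases le_total a 1 with h | h
  · rw [min_eq_left h]; exact (Real.le_sqrt ha ha).2 (by nlinarith)
  · rw [min_eq_right h]; exact Real.one_le_sqrt.2 h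

theorem sqrt_pow {x : ℝ} (hx : 0 ≤ x) (m : ℕ) : √(x ^ m) = √x ^ m := by
  rw [← Real.sqrt_sq (pow_nonneg (sqrt_nonneg x) m), ← pow_mul, mul_comm, pow_mul, Real.sq_sqrt hx]

theorem two_zpow_neg_mul_min_one_le {a C : ℝ} (ha : 0 ≤ a) (m : ℕ) (haC : a ≤ 2 ^ m * C) :
    (2:ℝ) ^ (-(m:ℤ)) * min a 1 ≤ √C * (√2 / 2) ^ m := by
  calc (2:ℝ) ^ (-(m:ℤ)) * min a 1 ≤ (2:ℝ) ^ (-(m:ℤ)) * √(2 ^ m * C) := by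
        gcongr
        exact (min_one_le_sqrt ha).trans (Real.sqrt_le_sqrt haC)
    _ = √C * (√2 / 2) ^ m := by
        rw [Real.sqrt_mul (by positivity), sqrt_pow zero_le_two, zpow_neg, zpow_natCast, div_pow]
        field_simp

theorem tsum_two_zpow_neg_mul_min_one_le {a : ℕ → ℝ} {C : ℝ} (ha : ∀ n, 0 ≤ a n)
    (haC : ∀ n, a n ≤ 2 ^ (n + 2) * C) :
    ∑' n : ℕ, (2:ℝ) ^ (-((n:ℤ) + 2)) * min (a n) 1 ≤ 2 * √C := by
  set r := √2 / 2 with hr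
  have hr0 : 0 ≤ r := by positivity
  have hr1 : r ≤ 3 / 4 := by
    have : √2 ≤ 3 / 2 := Real.sqrt_le_iff.2 ⟨by norm_num, by norm_num⟩
    rw [hr]; linarith
  have hr2 : r ^ 2 = 1 / 2 := by rw [div_pow, Real.sq_sqrt zero_le_two]; norm_num
  have hterm (n : ℕ) : (2:ℝ) ^ (-((n:ℤ) + 2)) * min (a n) 1 ≤ √C * r ^ 2 * r ^ n := by
    simpa [pow_add, mul_assoc, mul_comm, mul_left_comm] using
      two_zpow_neg_mul_min_one_le (ha n) (n + 2) (haC n)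
  have hnonneg (n : ℕ) : 0 ≤ (2:ℝ) ^ (-((n:ℤ) + 2)) * min (a n) 1 := by
    have := ha n
    positivity
  have hgeom : HasSum (fun n : ℕ => √C * r ^ 2 * r ^ n) (√C * r ^ 2 * (1 - r)⁻¹) :=
    (hasSum_geometric_of_lt_one hr0 (by linarith)).mul_left _
  calc ∑' n : ℕ, (2:ℝ) ^ (-((n:ℤ) + 2)) * min (a n) 1 ≤ √C * r ^ 2 * (1 - r)⁻¹ :=
        hasSum_le hterm (hgeom.summable.of_nonneg_of_le hnonneg hterm).hasSum hgeom
    _ ≤ 2 * √C := by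
        have hsC : 0 ≤ √C := sqrt_nonneg C
        have : (1 - r)⁻¹ ≤ 4 := by
          rw [inv_le_comm₀ (by linarith) (by norm_num)]; linarith
        rw [hr2, mul_assoc, mul_comm 2]
        gcongr
        linarith

noncomputable def zeta1Integrand (x s : ℝ) : ℝ :=
  sin (x * arctan s) * (1 + s ^ 2) ^ (-(x / 2)) * exp (-(π * s) - 1)

theorem zeta1_eq (t x : ℝ) :
    zeta1 t x = 2 ^ x / (x - 1) - 2 ^ x * ∫ s in (0:ℝ)..t, zeta1Integrand x s :=
  rfl

theorem continuous_zeta1Integrand (x : ℝ) : Continuous (zeta1Integrand x) := by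
  have hpow : Continuous fun s : ℝ => (1 + s ^ 2) ^ (-(x / 2)) :=
    (by fun_prop : Continuous fun s : ℝ => 1 + s ^ 2).rpow_const fun s => Or.inl (by positivity)
  unfold zeta1Integrand
  fun_prop

theorem abs_zeta1Integrand_le {x : ℝ} (hx : 0 ≤ x) (s : ℝ) :
    |zeta1Integrand x s| ≤ exp (-1) * exp (-(π * s)) := by
  have hsin : |sin (x * arctan s)| ≤ 1 := abs_sin_le_one _
  have hpow : (1 + s ^ 2) ^ (-(x / 2)) ≤ 1 :=
    rpow_le_one_of_one_le_of_nonpos (by nlinarith) (by linarith)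
  have hpow0 : 0 ≤ (1 + s ^ 2) ^ (-(x / 2)) := by positivity
  rw [zeta1Integrand, abs_mul, abs_mul, abs_of_nonneg hpow0, abs_exp, ← exp_add,
    show -1 + -(π * s) = -(π * s) - 1 by ring]
  calc |sin (x * arctan s)| * (1 + s ^ 2) ^ (-(x / 2)) * exp (-(π * s) - 1)
      ≤ 1 * 1 * exp (-(π * s) - 1) := by gcongr
    _ = exp (-(π * s) - 1) := by ring

theorem zeta1_sub_zeta1 (a b x : ℝ) :
    zeta1 a x - zeta1 b x = 2 ^ x * ∫ s in a..b, zeta1Integrand x s := by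
  have hadd := intervalIntegral.integral_add_adjacent_intervals (μ := MeasureTheory.volume)
    ((continuous_zeta1Integrand x).intervalIntegrable 0 a)
    ((continuous_zeta1Integrand x).intervalIntegrable a b)
  rw [zeta1_eq, zeta1_eq, ← hadd]
  ring

theorem abs_zeta1_sub_zeta1_le {τ a b x : ℝ} (hx : 0 ≤ x) (ha : τ ≤ a) (hb : τ ≤ b) :
    |zeta1 a x - zeta1 b x| ≤ 2 ^ x * (exp (-1) * exp (-(π * τ)) / π) := by
  rw [zeta1_sub_zeta1, abs_mul, abs_of_pos (by positivity)]
  gcongr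
  exact abs_intervalIntegral_le_of_abs_le_mul_exp pi_pos
    (fun s _ => abs_zeta1Integrand_le hx s) ha hb

theorem sSup_abs_zeta1_sub_zeta1_le {τ a b : ℝ} (ha : τ ≤ a) (hb : τ ≤ b) (y : ℝ) :
    sSup ((fun x => |zeta1 a x - zeta1 b x|) '' Set.Icc 2 y) ≤
      2 ^ y * (exp (-1) * exp (-(π * τ)) / π) := by
  refine Real.sSup_le ?_ (by positivity)
  rintro _ ⟨x, hx, rfl⟩
  calc |zeta1 a x - zeta1 b x| ≤ 2 ^ x * (exp (-1) * exp (-(π * τ)) / π) :=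
        abs_zeta1_sub_zeta1_le (by linarith [hx.1]) ha hb
    _ ≤ 2 ^ y * (exp (-1) * exp (-(π * τ)) / π) := by
        gcongr
        · norm_num
        · exact hx.2

theorem two_mul_sqrt_lt_two_rpow_neg {τ : ℝ} (hτ : 0 ≤ τ) :
    2 * √(exp (-1) * exp (-(π * τ)) / π) < 2 ^ (-τ) := by
  have hexp : exp (-(π * τ)) ≤ ((2:ℝ) ^ (-τ)) ^ 2 := by
    rw [← rpow_natCast, ← rpow_mul zero_le_two, rpow_def_of_pos two_pos, exp_le_exp]
    push_cast
    nlinarith [log_two_lt_d9, pi_gt_three]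
  have hconst : exp (-1) / π < 1 / 4 := by
    have he : (exp 1)⁻¹ < 1 / 2 :=
      (inv_lt_comm₀ (exp_pos 1) (by norm_num)).2 (by norm_num; linarith [exp_one_gt_d9])
    rw [exp_neg, div_lt_iff₀ pi_pos]
    linarith [pi_gt_three]
  rw [← lt_div_iff₀' two_pos, sqrt_lt' (by positivity)]
  calc exp (-1) * exp (-(π * τ)) / π = exp (-1) / π * exp (-(π * τ)) := by ring
    _ < 1 / 4 * exp (-(π * τ)) := mul_lt_mul_of_pos_right hconst (exp_pos _)
    _ ≤ 1 / 4 * ((2:ℝ) ^ (-τ)) ^ 2 := by gcongr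
    _ = ((2:ℝ) ^ (-τ) / 2) ^ 2 := by ring

/-- `ζ₁` is an id-convergent Cauchy stream: for all `τ ≥ 0` and
`t₁, t₂ ≥ τ`, `Σ_{n≥2} 2^{-n}·min(sup_{x∈[2,n]} |ζ₁(t₁,x) − ζ₁(t₂,x)|, 1) < 2^{-τ}`. -/
theorem zeta1_id_convergent (τ : ℝ) (hτ : 0 ≤ τ)
    (t₁ t₂ : ℝ) (ht₁ : τ ≤ t₁) (ht₂ : τ ≤ t₂) :
    (∑' n : ℕ, (2 : ℝ) ^ (-((n : ℤ) + 2)) *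
      min (sSup ((fun x => |zeta1 t₁ x - zeta1 t₂ x|) ''
        Set.Icc (2 : ℝ) ((n : ℝ) + 2))) 1) < (2 : ℝ) ^ (-τ) := by
  refine (tsum_two_zpow_neg_mul_min_one_le (fun n => ?_) (fun n => ?_)).trans_lt
    (two_mul_sqrt_lt_two_rpow_neg hτ)
  · refine Real.sSup_nonneg ?_
    rintro _ ⟨x, -, rfl⟩
    exact abs_nonneg _
  · exact_mod_cast sSup_abs_zeta1_sub_zeta1_le ht₁ ht₂ ((n : ℝ) + 2)
end
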